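/- Closure of ESN under componentwise sign changes: if X ∼ ESN_p(μ, Σ, λ, τ) and Λ_s = Diag(s) for s ∈ {-1,1}^p, then Λ_s X ∼ ESN_p(Λ_s μ, Λ_s Σ Λ_s, Λ_s λ, τ); equivalently, for all x ∈ ℝ^p, ESN_p(Λ_s x; μ, Σ, λ, τ) = ESN_p(x; Λ_s μ, Λ_s Σ Λ_s, Λ_s λ, τ). -/

import Mathlib

open MeasureTheory Real Matrix Filter

/-- Standard normal cdf Φ. -/
noncomputable def stdCDF (t : ℝ) : ℝ :=
  ∫ x in Set.Iic t, ProbabilityTheory.gaussianPDFReal 0 1 x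

/-- Univariate normal density with mean `m` and variance `v`. -/
noncomputable def normPDF (m v x : ℝ) : ℝ :=
  (Real.sqrt (2 * π * v))⁻¹ * Real.exp (-((x - m) ^ 2 / (2 * v)))

/-- Multivariate normal density with mean `μ` and covariance `S`. -/
noncomputable def mvnPDF {n : Type*} [Fintype n] [DecidableEq n] (μ : n → ℝ) (S : Matrix n n ℝ)
    (x : n → ℝ) : ℝ :=
  (2 * π) ^ (-(Fintype.card n : ℝ) / 2) * S.det ^ (-(1 : ℝ) / 2) *
    Real.exp (-(dotProduct (x - μ) (S⁻¹ *ᵥ (x - μ))) / 2)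

/-- Extended skew-normal density. -/
noncomputable def esnPDF {n : Type*} [Fintype n] [DecidableEq n] (μ : n → ℝ)
    (S : Matrix n n ℝ) (hS : S.PosDef) (l : n → ℝ) (τ : ℝ) (y : n → ℝ) : ℝ :=
  (stdCDF (τ / Real.sqrt (1 + dotProduct l l)))⁻¹ * mvnPDF μ S y *
    stdCDF (τ + dotProduct l (((hS.posSemidef.1.eigenvectorUnitary.1 *
      diagonal ((↑) ∘ (√·) ∘ hS.posSemidef.1.eigenvalues) *
      (star hS.posSemidef.1.eigenvectorUnitary : Matrix n n ℝ)))⁻¹ *ᵥ (y - μ)))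

/-! The density is invariant under a simultaneous orthogonal change of variables
`x ↦ U x`, `μ ↦ U μ`, `Σ ↦ U Σ Uᵀ`, `λ ↦ U λ`: the determinant, the quadratic form and `λᵀλ` are
invariant, and the symmetric square root is equivariant, `(U Σ Uᵀ)^{1/2} = U Σ^{1/2} Uᵀ`, so the
skewing argument `λᵀ Σ^{-1/2} (x - μ)` is unchanged too. A sign change `Λ_s` is a symmetric
orthogonal involution. -/

open scoped MatrixOrder

namespace CFC

variable {A : Type*} [PartialOrder A] [Ring A] [StarRing A] [TopologicalSpace A]
  [StarOrderedRing A] [Algebra ℝ A] [ContinuousFunctionalCalculus ℝ A IsSelfAdjoint]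
  [NonnegSpectrumClass ℝ A] [IsSemitopologicalRing A] [T2Space A]

lemma sqrt_unitary_conj {U : A} (hU : U ∈ unitary A) {a : A} (ha : 0 ≤ a) :
    sqrt (U * a * star U) = U * sqrt a * star U := by
  refine (sqrt_eq_iff _ _ (star_right_conjugate_nonneg ha U)
    (star_right_conjugate_nonneg (sqrt_nonneg a) U)).mpr ?_
  calc U * sqrt a * star U * (U * sqrt a * star U)
      = U * sqrt a * (star U * U) * sqrt a * star U := by noncomm_ring
    _ = U * a * star U := by
      rw [Unitary.star_mul_self_of_mem hU, mul_one, mul_assoc U, sqrt_mul_sqrt_self a ha]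

end CFC

namespace Matrix

variable {n : Type*} [Fintype n] [DecidableEq n]

lemma PosSemidef.eigenvectorUnitary_mul_diagonal_sqrt_eq_sqrt {S : Matrix n n ℝ}
    (hS : S.PosSemidef) :
    hS.1.eigenvectorUnitary.1 * diagonal ((↑) ∘ (√·) ∘ hS.1.eigenvalues) *
      (star hS.1.eigenvectorUnitary : Matrix n n ℝ) = CFC.sqrt S := by
  rw [CFC.sqrt_eq_cfc, cfc_nnreal_eq_real _ S, hS.1.cfc_eq]
  simp only [IsHermitian.cfc, Unitary.conjStarAlgAut_apply]
  congr 3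
  funext i
  simp [Real.coe_toNNReal', max_eq_left (hS.eigenvalues_nonneg i)]

variable {R : Type*} [CommRing R] [StarRing R] {U : Matrix n n R}

lemma det_unitary_conj (hU : U ∈ unitaryGroup n R) (M : Matrix n n R) :
    (U * M * star U).det = M.det := by
  rw [det_mul, det_mul, mul_right_comm, ← det_mul, Unitary.mul_star_self_of_mem hU, det_one,
    one_mul]

lemma inv_unitary_conj (hU : U ∈ unitaryGroup n R) (M : Matrix n n R) :
    (U * M * star U)⁻¹ = U * M⁻¹ * star U := by
  rw [mul_inv_rev, mul_inv_rev, inv_eq_left_inv (Unitary.mul_star_self_of_mem hU),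
    inv_eq_left_inv (Unitary.star_mul_self_of_mem hU), Matrix.mul_assoc]

lemma unitary_conj_mulVec_unitary_mulVec (hU : U ∈ unitaryGroup n R) (M : Matrix n n R)
    (v : n → R) : (U * M * star U) *ᵥ (U *ᵥ v) = U *ᵥ (M *ᵥ v) := by
  rw [mulVec_mulVec, Matrix.mul_assoc, Matrix.mul_assoc, Unitary.star_mul_self_of_mem hU,
    Matrix.mul_one, mulVec_mulVec]

lemma dotProduct_unitary_mulVec [TrivialStar R] (hU : U ∈ unitaryGroup n R) (a b : n → R) :
    (U *ᵥ a) ⬝ᵥ (U *ᵥ b) = a ⬝ᵥ b := by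
  have hUU : Uᵀ * U = 1 := by
    simpa [star_eq_conjTranspose] using Unitary.star_mul_self_of_mem hU
  rw [dotProduct_mulVec, ← mulVec_transpose, mulVec_mulVec, hUU, one_mulVec]

end Matrix

section UnitaryInvariance

variable {n : Type*} [Fintype n] [DecidableEq n] {U : Matrix n n ℝ}

lemma mvnPDF_unitary_conj (hU : U ∈ unitaryGroup n ℝ) (μ : n → ℝ) (S : Matrix n n ℝ)
    (y : n → ℝ) : mvnPDF (U *ᵥ μ) (U * S * star U) (U *ᵥ y) = mvnPDF μ S y := by
  rw [mvnPDF, mvnPDF, det_unitary_conj hU, inv_unitary_conj hU, ← mulVec_sub,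
    unitary_conj_mulVec_unitary_mulVec hU, dotProduct_unitary_mulVec hU]

lemma esnPDF_unitary_conj (hU : U ∈ unitaryGroup n ℝ) (μ : n → ℝ) {S : Matrix n n ℝ}
    (hS : S.PosDef) (hS' : (U * S * star U).PosDef) (l : n → ℝ) (τ : ℝ) (y : n → ℝ) :
    esnPDF (U *ᵥ μ) (U * S * star U) hS' (U *ᵥ l) τ (U *ᵥ y) = esnPDF μ S hS l τ y := by
  rw [esnPDF, esnPDF, mvnPDF_unitary_conj hU, dotProduct_unitary_mulVec hU,
    hS.posSemidef.eigenvectorUnitary_mul_diagonal_sqrt_eq_sqrt,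
    hS'.posSemidef.eigenvectorUnitary_mul_diagonal_sqrt_eq_sqrt,
    CFC.sqrt_unitary_conj hU hS.posSemidef.nonneg, inv_unitary_conj hU, ← mulVec_sub,
    unitary_conj_mulVec_unitary_mulVec hU, dotProduct_unitary_mulVec hU]

end UnitaryInvariance

/-- closure of the ESN under componentwise sign changes:
`ESN_p(Λ_s x; μ, Σ, λ, τ) = ESN_p(x; Λ_s μ, Λ_s Σ Λ_s, Λ_s λ, τ)`. -/
theorem esn_sign_change {p : ℕ} (μ : Fin p → ℝ) (S : Matrix (Fin p) (Fin p) ℝ)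
    (hS : S.PosDef) (l : Fin p → ℝ) (τ : ℝ)
    (d : Fin p → ℝ) (hd : ∀ i, d i = 1 ∨ d i = -1)
    (hSs : (Matrix.diagonal d * S * Matrix.diagonal d).PosDef)
    (x : Fin p → ℝ) :
    esnPDF μ S hS l τ (fun i => d i * x i) =
      esnPDF (fun i => d i * μ i) (Matrix.diagonal d * S * Matrix.diagonal d)
        hSs (fun i => d i * l i) τ x := by
  have hDD : diagonal d * diagonal d = 1 := by
    rw [diagonal_mul_diagonal, ← diagonal_one]
    exact congrArg diagonal (funext fun i => by rcases hd i with h | h <;> simp [h])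
  have hstar : star (diagonal d) = diagonal d := by simp [star_eq_conjTranspose]
  have hD : diagonal d ∈ unitaryGroup (Fin p) ℝ := by rw [mem_unitaryGroup_iff, hstar, hDD]
  have hDv (v : Fin p → ℝ) : diagonal d *ᵥ v = fun i => d i * v i := funext (mulVec_diagonal d v)
  have hDDx : diagonal d *ᵥ (diagonal d *ᵥ x) = x := by rw [mulVec_mulVec, hDD, one_mulVec]
  have key := esnPDF_unitary_conj hD μ hS (by rwa [hstar]) l τ (diagonal d *ᵥ x)
  rw [hDDx] at key
  simp only [hstar, hDv] at key
  exact key.symm
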